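/- arXiv:1202.5417 — 4 statements merged into one kernel-verified Lean document; each statement's English description precedes it below -/
import Mathlib

section
/- In the free group F₂ := FreeGroup (Fin 2) with free generators x₀, x₁, there is no group automorphism Φ of F₂ with Φ (x₀² * x₁ * x₀⁻¹ * x₁) = x₀ * x₁. -/
/-!
Precomposition with an automorphism `Φ` of `F₂` with `Φ u = v` is a bijection from the
homomorphisms `F₂ → G` killing `v` onto those killing `u`, so the two counts agree for every
finite `G`. For `G = S₃` they do not: `12` homomorphisms kill `x₀² x₁ x₀⁻¹ x₁`, only `6`
kill `x₀ x₁`.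
-/

open FreeGroup (of lift lift_apply_of)

section HomsKilling

variable {F F' : Type*} [Group F] [Group F'] (G : Type*) [Group G]

def MulEquiv.homsKillingEquiv (Φ : F ≃* F') (w : F) :
    {f : F' →* G // f (Φ w) = 1} ≃ {f : F →* G // f w = 1} where
  toFun f := ⟨f.1.comp Φ.toMonoidHom, f.2⟩
  invFun f := ⟨f.1.comp Φ.symm.toMonoidHom, by simpa using f.2⟩
  left_inv f := by ext; simp
  right_inv f := by ext; simp

theorem MulEquiv.card_homs_killing_eq (Φ : F ≃* F') (w : F) :
    Nat.card {f : F' →* G // f (Φ w) = 1} = Nat.card {f : F →* G // f w = 1} :=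
  Nat.card_congr (Φ.homsKillingEquiv G w)

end HomsKilling

theorem FreeGroup.card_subtype_hom_fin_two {G : Type*} [Group G]
    (P : (FreeGroup (Fin 2) →* G) → Prop) :
    Nat.card {f // P f} = Nat.card {p : G × G // P (lift ![p.1, p.2])} := by
  refine Nat.card_congr ((Equiv.subtypeEquiv (q := fun g => P (lift g)) lift.symm fun f => ?_).trans
    (Equiv.subtypeEquiv (piFinTwoEquiv fun _ => G) fun g => ?_))
  · simp
  · have hg : ![g 0, g 1] = g := by ext i; fin_cases i <;> rfl
    simp [hg]

theorem card_perm_three_homs_killing_of_mul_of :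
    Nat.card {f : FreeGroup (Fin 2) →* Equiv.Perm (Fin 3) // f (of 0 * of 1) = 1} = 6 := by
  rw [FreeGroup.card_subtype_hom_fin_two]
  simp only [map_mul, lift_apply_of, Matrix.cons_val_zero, Matrix.cons_val_one]
  rw [Nat.card_eq_fintype_card]
  decide

theorem card_perm_three_homs_killing_of_sq_mul_of_mul_inv_of_mul_of :
    Nat.card {f : FreeGroup (Fin 2) →* Equiv.Perm (Fin 3) //
      f (of 0 ^ 2 * of 1 * (of 0)⁻¹ * of 1) = 1} = 12 := by
  rw [FreeGroup.card_subtype_hom_fin_two]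
  simp only [map_mul, map_pow, map_inv, lift_apply_of, Matrix.cons_val_zero, Matrix.cons_val_one]
  rw [Nat.card_eq_fintype_card]
  set_option maxRecDepth 100000 in decide

/-- There is no automorphism of the free group of rank 2 sending
`x₀² x₁ x₀⁻¹ x₁` to `x₀ x₁`, where `x₀`, `x₁` are the free generators. -/
theorem no_automorphism_freeGroup_rank_two :
    ¬ ∃ Φ : FreeGroup (Fin 2) ≃* FreeGroup (Fin 2),
        Φ ((FreeGroup.of 0) ^ 2 * FreeGroup.of 1 * (FreeGroup.of 0)⁻¹ * FreeGroup.of 1) =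
          FreeGroup.of 0 * FreeGroup.of 1 := by
  rintro ⟨Φ, hΦ⟩
  have h := Φ.card_homs_killing_eq (Equiv.Perm (Fin 3))
    (of 0 ^ 2 * of 1 * (of 0)⁻¹ * of 1)
  rw [hΦ, card_perm_three_homs_killing_of_mul_of,
    card_perm_three_homs_killing_of_sq_mul_of_mul_inv_of_mul_of] at h
  omega
end

section
/- Let L be a first-order language and let M and N be isotyped L-structures. Then for every finitely generated L-substructure A of M there exists an L-substructure B of N such that A and B are isomorphic as L-structures. -/
open FirstOrder Language

/-- Two `L`-structures are isotyped if every type of a tuple realized in one of them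
is also realized in the other. -/
def Isotyped (L : FirstOrder.Language) (M N : Type*) [L.Structure M] [L.Structure N] :
    Prop :=
  (∀ (n : ℕ) (a : Fin n → M), ∃ b : Fin n → N,
      ∀ φ : L.Formula (Fin n), φ.Realize a ↔ φ.Realize b) ∧
  (∀ (n : ℕ) (b : Fin n → N), ∃ a : Fin n → M,
      ∀ φ : L.Formula (Fin n), φ.Realize a ↔ φ.Realize b)

/-!
Write `A` as the closure of a tuple `a`, and let `b` be a tuple of `N` realizing the type of `a`.
Every element of `A` is the value of a term at `a`; sending it to the value of the same term
at `b` is well defined and injective because `a` and `b` satisfy the same equations between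
terms, and it preserves relations because they satisfy the same atomic formulas. This embeds
`A` into `N`, and `A` is isomorphic to the image.
-/

namespace FirstOrder.Language

variable {L : Language} {M N : Type*} [L.Structure M] [L.Structure N] {α : Type*}

theorem Substructure.exists_term_realize_eq_of_mem_closure_range {a : α → M} {x : M}
    (hx : x ∈ Substructure.closure L (Set.range a)) : ∃ t : L.Term α, t.realize a = x := by
  obtain ⟨t, rfl⟩ := Substructure.mem_closure_iff_exists_term.mp hx
  refine ⟨t.relabel fun y => y.2.choose, ?_⟩
  rw [Term.realize_relabel]
  congr 1
  funext y
  exact y.2.choose_spec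

section SameAtomicType

variable {a : α → M} {b : α → N}
  (hab : ∀ φ : L.Formula α, φ.IsAtomic → (φ.Realize a ↔ φ.Realize b))
include hab

theorem Term.realize_eq_iff_of_realize_atomic_iff (t s : L.Term α) :
    t.realize a = s.realize a ↔ t.realize b = s.realize b := by
  simpa only [Formula.realize_equal] using
    hab (t.equal s) (BoundedFormula.IsAtomic.equal _ _)

theorem Relations.realize_iff_of_realize_atomic_iff {k : ℕ} (r : L.Relations k)
    (ts : Fin k → L.Term α) :
    Structure.RelMap r (fun i => (ts i).realize a) ↔
      Structure.RelMap r (fun i => (ts i).realize b) := by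
  simpa only [Formula.realize_rel] using hab (r.formula ts) (BoundedFormula.IsAtomic.rel _ _)

noncomputable def Substructure.closureRangeEmbedding :
    Substructure.closure L (Set.range a) ↪[L] N :=
  let T : Substructure.closure L (Set.range a) → L.Term α := fun x =>
    (Substructure.exists_term_realize_eq_of_mem_closure_range x.2).choose
  have hT : ∀ x, (T x).realize a = x := fun x =>
    (Substructure.exists_term_realize_eq_of_mem_closure_range x.2).choose_spec
  { toFun := fun x => (T x).realize b
    inj' := fun x y hxy => Subtype.ext <| by
      rw [← hT x, ← hT y]
      exact (Term.realize_eq_iff_of_realize_atomic_iff hab _ _).mpr hxy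
    map_fun' := fun {k} F x => by
      have hM : (T (Structure.funMap F x)).realize a =
          (Term.func F fun i => T (x i)).realize a := by
        simp only [hT, Term.realize_func]
        rfl
      exact (Term.realize_eq_iff_of_realize_atomic_iff hab _ _).mp hM
    map_rel' := fun {k} r x => by
      have hM : Structure.RelMap r x ↔ Structure.RelMap r fun i => (T (x i)).realize a := by
        simp only [hT]
        rfl
      rw [hM, Relations.realize_iff_of_realize_atomic_iff hab]
      rfl }

end SameAtomicType

end FirstOrder.Language

/-- If `M` and `N` are isotyped `L`-structures, then every finitely generated
substructure of `M` is isomorphic to some substructure of `N`. -/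
theorem isotyped_fg_substructure {L : FirstOrder.Language} {M N : Type*}
    [L.Structure M] [L.Structure N] (h : Isotyped L M N)
    (A : L.Substructure M) (hA : A.FG) :
    ∃ B : L.Substructure N, Nonempty (L.Equiv A B) := by
  obtain ⟨n, a, rfl⟩ := Substructure.fg_iff_exists_fin_generating_family.mp hA
  obtain ⟨b, hab⟩ := h.1 n a
  let e := Substructure.closureRangeEmbedding (a := a) (b := b) fun φ _ => hab φ
  exact ⟨e.toHom.range, ⟨e.equivRange⟩⟩
end

section
/- Let H := (Fin n → ℤ) be the free abelian group of finite rank n and let G be any abelian group, both regarded as structures for the language of abelian groups. If G and H are isotyped, then G and H are isomorphic as additive groups: G ≃+ (Fin n → ℤ). -/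
/-- Function symbols of the first-order language of abelian groups:
a binary addition, a unary negation and a constant zero. -/
inductive AbGroupFunc : ℕ → Type
  | add : AbGroupFunc 2
  | neg : AbGroupFunc 1
  | zero : AbGroupFunc 0

/-- The first-order language of abelian groups. -/
def LAb : FirstOrder.Language where
  Functions := AbGroupFunc
  Relations := fun _ => Empty

/-- Any additive commutative group is an `LAb`-structure in the obvious way. -/
instance LAb.structureOfAddCommGroup (G : Type*) [AddCommGroup G] :
    LAb.Structure G where
  funMap f x :=
    match f with
    | AbGroupFunc.add => x 0 + x 1
    | AbGroupFunc.neg => -x 0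
    | AbGroupFunc.zero => 0
  RelMap r _ := r.elim

/-!
Let `e` be the standard basis of `ℤⁿ` and let `a` be a tuple of `G` with the same type. Linear
relations `∑ cᵢ xᵢ = 0` are first-order, so `a` is linearly independent. To see that `a` spans,
take `g : G` and a tuple `(b, x)` of `ℤⁿ` with the type of `(a, g)`. Then `b` has the type of `e`;
in particular `p ∣ ∑ cᵢ bᵢ` forces `p ∣ cᵢ` for every prime `p`, so the matrix with rows `bᵢ`
is invertible modulo every prime, hence over `ℤ`. Thus `x` is an integer combination of `b`,
and that relation transfers back to express `g` in terms of `a`.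
-/

open FirstOrder FirstOrder.Language Submodule Set Matrix

theorem Matrix.isUnit_det_of_forall_prime_dvd {ι : Type*} [Fintype ι] [DecidableEq ι]
    {B : Matrix ι ι ℤ}
    (h : ∀ p : ℕ, p.Prime → ∀ c : ι → ℤ, (∀ j, (p : ℤ) ∣ (c ᵥ* B) j) → ∀ i, (p : ℤ) ∣ c i) :
    IsUnit B.det := by
  rw [Int.isUnit_iff_natAbs_eq, Nat.eq_one_iff_not_exists_prime_dvd]
  intro p hp hdvd
  have := Fact.mk hp
  let π := Int.castRingHom (ZMod p)
  have hdet : (π.mapMatrix B).det = 0 := by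
    rw [← RingHom.map_det]
    exact (ZMod.intCast_zmod_eq_zero_iff_dvd _ _).2 (Int.natCast_dvd.2 hdvd)
  obtain ⟨c, hc0, hcB⟩ := Matrix.exists_vecMul_eq_zero_iff.2 hdet
  let c' : ι → ℤ := fun i => (c i).cast
  have hc' : π ∘ c' = c := funext fun i => ZMod.intCast_zmod_cast _
  have hdvd' : ∀ j, (p : ℤ) ∣ (c' ᵥ* B) j := fun j => by
    rw [← ZMod.intCast_zmod_eq_zero_iff_dvd]
    change π _ = 0
    rw [RingHom.map_vecMul, hc']
    exact congrFun hcB j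
  refine hc0 (hc' ▸ funext fun i => ?_)
  exact (ZMod.intCast_zmod_eq_zero_iff_dvd _ _).2 (h p hp c' hdvd' i)

theorem Pi.exists_nsmul_eq_iff_forall_dvd {ι : Type*} {m : ℕ} {v : ι → ℤ} :
    (∃ z, m • z = v) ↔ ∀ j, (m : ℤ) ∣ v j := by
  constructor
  · rintro ⟨z, rfl⟩ j
    exact ⟨z j, by simp⟩
  · intro h
    choose z hz using h
    exact ⟨z, funext fun j => by simp [hz j]⟩

theorem span_range_eq_top_of_forall_prime_dvd {ι : Type*} [Fintype ι] [DecidableEq ι]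
    {b : ι → ι → ℤ}
    (h : ∀ p : ℕ, p.Prime → ∀ c : ι → ℤ, (∃ z, p • z = ∑ i, c i • b i) → ∃ w, p • w = c) :
    span ℤ (range b) = ⊤ := by
  have hdet : IsUnit (Matrix.of b).det :=
    isUnit_det_of_forall_prime_dvd fun p hp c hc =>
      Pi.exists_nsmul_eq_iff_forall_dvd.1 <|
        h p hp c (Pi.exists_nsmul_eq_iff_forall_dvd.2 (by simpa [vecMul_eq_sum] using hc))
  have hsurj := vecMul_surjective_iff_isUnit.2 ((isUnit_iff_isUnit_det _).2 hdet)
  refine eq_top_iff'.2 fun x => mem_span_range_iff_exists_fun ℤ |>.2 ?_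
  obtain ⟨c, hc⟩ := hsurj x
  exact ⟨c, (vecMul_eq_sum c (of b)).symm.trans hc⟩

theorem FirstOrder.Language.Formula.realize_comp_iff_of_realize_iff {L : Language}
    {M N : Type*} [L.Structure M] [L.Structure N] {α β : Type*} {a : β → M} {b : β → N}
    (h : ∀ φ : L.Formula β, φ.Realize a ↔ φ.Realize b) (f : α → β) (φ : L.Formula α) :
    φ.Realize (a ∘ f) ↔ φ.Realize (b ∘ f) := by
  simpa only [Formula.realize_relabel] using h (φ.relabel f)

namespace LAb

variable {α : Type*}

def zeroTerm : LAb.Term α := Term.func AbGroupFunc.zero ![]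

def addTerm (t s : LAb.Term α) : LAb.Term α := Term.func AbGroupFunc.add ![t, s]

def negTerm (t : LAb.Term α) : LAb.Term α := Term.func AbGroupFunc.neg ![t]

def nsmulTerm : ℕ → LAb.Term α → LAb.Term α
  | 0, _ => zeroTerm
  | m + 1, t => addTerm (nsmulTerm m t) t

def zsmulTerm : ℤ → LAb.Term α → LAb.Term α
  | (m : ℕ), t => nsmulTerm m t
  | .negSucc m, t => negTerm (nsmulTerm (m + 1) t)

def linearCombination {k : ℕ} (c : Fin k → ℤ) : LAb.Term (Fin k) :=
  ((List.finRange k).map fun i => zsmulTerm (c i) (var i)).foldr addTerm zeroTerm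

def dvdFormula (m : ℕ) (t : LAb.Term α) : LAb.Formula α :=
  ∃' (nsmulTerm m (var (Sum.inr 0))).bdEqual (t.relabel Sum.inl)

variable {M : Type*} [AddCommGroup M] {v : α → M}

@[simp] theorem realize_zeroTerm : (zeroTerm : LAb.Term α).realize v = 0 := rfl

@[simp] theorem realize_addTerm (t s : LAb.Term α) :
    (addTerm t s).realize v = t.realize v + s.realize v := rfl

@[simp] theorem realize_negTerm (t : LAb.Term α) : (negTerm t).realize v = -t.realize v := rfl

@[simp] theorem realize_nsmulTerm (m : ℕ) (t : LAb.Term α) :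
    (nsmulTerm m t).realize v = m • t.realize v := by
  induction m with
  | zero => simp [nsmulTerm]
  | succ m ih => simp [nsmulTerm, ih, succ_nsmul]

@[simp] theorem realize_zsmulTerm (c : ℤ) (t : LAb.Term α) :
    (zsmulTerm c t).realize v = c • t.realize v := by
  cases c <;> simp [zsmulTerm, negSucc_zsmul]

theorem realize_foldr_addTerm (l : List (LAb.Term α)) :
    (l.foldr addTerm zeroTerm).realize v = (l.map (Term.realize v)).sum := by
  induction l with
  | nil => rfl
  | cons t l ih => simp [ih]

@[simp] theorem realize_linearCombination {k : ℕ} (c : Fin k → ℤ) (v : Fin k → M) :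
    (linearCombination c).realize v = ∑ i, c i • v i := by
  simp [linearCombination, realize_foldr_addTerm, Fin.sum_univ_def, Function.comp_def]

@[simp] theorem realize_dvdFormula (m : ℕ) (t : LAb.Term α) :
    (dvdFormula m t).Realize v ↔ ∃ z : M, m • z = t.realize v := by
  simp only [dvdFormula, Formula.Realize, BoundedFormula.realize_ex,
    BoundedFormula.realize_bdEqual, Term.realize_relabel, realize_nsmulTerm]
  rfl

end LAb

open LAb

section Transfer

variable {M N : Type*} [AddCommGroup M] [AddCommGroup N] {k : ℕ} {a : Fin k → M} {b : Fin k → N}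

theorem linearIndependent_iff_of_realize_iff
    (h : ∀ φ : LAb.Formula (Fin k), φ.Realize a ↔ φ.Realize b) :
    LinearIndependent ℤ a ↔ LinearIndependent ℤ b := by
  simp only [Fintype.linearIndependent_iff]
  refine forall_congr' fun c => imp_congr ?_ Iff.rfl
  simpa using h ((linearCombination c).equal zeroTerm)

theorem exists_nsmul_eq_sum_iff_of_realize_iff
    (h : ∀ φ : LAb.Formula (Fin k), φ.Realize a ↔ φ.Realize b) (m : ℕ) (c : Fin k → ℤ) :
    (∃ z, m • z = ∑ i, c i • a i) ↔ ∃ z, m • z = ∑ i, c i • b i := by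
  simpa using h (dvdFormula m (linearCombination c))

theorem mem_span_of_realize_iff {g : M} {x : N}
    (h : ∀ φ : LAb.Formula (Fin (k + 1)), φ.Realize (Fin.snoc a g) ↔ φ.Realize (Fin.snoc b x))
    (hx : x ∈ span ℤ (range b)) : g ∈ span ℤ (range a) := by
  obtain ⟨c, hc⟩ := (mem_span_range_iff_exists_fun ℤ).1 hx
  have hg := (h (((linearCombination c).relabel Fin.castSucc).equal (var (Fin.last k)))).2
    (by simpa [Term.realize_relabel, Fin.snoc_comp_castSucc] using hc)
  exact (mem_span_range_iff_exists_fun ℤ).2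
    ⟨c, by simpa [Term.realize_relabel, Fin.snoc_comp_castSucc] using hg⟩

end Transfer

theorem span_range_eq_top_of_realize_iff_basisFun {k : ℕ} {b : Fin k → Fin k → ℤ}
    (h : ∀ φ : LAb.Formula (Fin k), φ.Realize (Pi.basisFun ℤ (Fin k)) ↔ φ.Realize b) :
    span ℤ (range b) = ⊤ :=
  span_range_eq_top_of_forall_prime_dvd fun p _ c hc => by
    have hsum : ∑ i, c i • Pi.basisFun ℤ (Fin k) i = c := by
      simpa using (Pi.basisFun ℤ (Fin k)).sum_repr c
    simpa only [hsum] using (exists_nsmul_eq_sum_iff_of_realize_iff h p c).2 hc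

/-- If an abelian group `G` is isotyped with the free abelian group `Fin n → ℤ`
of finite rank `n`, then `G` is isomorphic to it. -/
theorem isotyped_with_free_abelian_is_isomorphic {n : ℕ} {G : Type*} [AddCommGroup G]
    (h : Isotyped LAb G (Fin n → ℤ)) :
    Nonempty (G ≃+ (Fin n → ℤ)) := by
  obtain ⟨a, ha⟩ := h.2 n (Pi.basisFun ℤ (Fin n))
  have hli : LinearIndependent ℤ a :=
    (linearIndependent_iff_of_realize_iff ha).2 (Pi.basisFun ℤ (Fin n)).linearIndependent
  have hspan : ⊤ ≤ span ℤ (range a) := by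
    rintro g -
    obtain ⟨b, hb⟩ := h.1 (n + 1) (Fin.snoc a g)
    have hinit : ∀ φ : LAb.Formula (Fin n),
        φ.Realize (Pi.basisFun ℤ (Fin n)) ↔ φ.Realize (Fin.init b) := fun φ => by
      rw [← ha φ, ← Fin.snoc_comp_castSucc (a := g) (f := a)]
      exact Formula.realize_comp_iff_of_realize_iff hb Fin.castSucc φ
    rw [← Fin.snoc_init_self b] at hb
    exact mem_span_of_realize_iff hb (span_range_eq_top_of_realize_iff_basisFun hinit ▸ mem_top)
  exact ⟨(Module.Basis.mk hli hspan).equivFun.toAddEquiv⟩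
end

section
/- Let S := FreeSemigroup α be a free semigroup and let σ, τ : S →ₙ* S be semigroup endomorphisms. If w ∈ S satisfies τ (σ w) = w, then for every letter x ∈ α occurring in the word w, the image σ (FreeSemigroup.of x) is a single letter, i.e., has length 1. -/
/-! A semigroup homomorphism between free semigroups sends each letter to a word of length at
least one, so it does not decrease length, and a letter `x` of `w` whose image has length `k`
adds `k - 1` to the length of the image of `w`. Since `τ` does not decrease length either,
`|w| ≤ |σ w| ≤ |τ (σ w)| = |w|`, which leaves no room for any letter of `w` to be lengthened. -/

namespace FreeSemigroup

variable {α β : Type*}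

theorem length_pos (w : FreeSemigroup α) : 0 < w.length :=
  Nat.succ_pos _

theorem length_le_length_apply (f : FreeSemigroup α →ₙ* FreeSemigroup β)
    (w : FreeSemigroup α) : w.length ≤ (f w).length := by
  induction w with
  | ih1 x => exact length_pos _
  | ih2 x v _ hv =>
    rw [map_mul, length_mul, length_mul, length_of]
    have := length_pos (f (of x))
    omega

theorem length_add_length_apply_le_of_mem (f : FreeSemigroup α →ₙ* FreeSemigroup β)
    {w : FreeSemigroup α} {x : α} (hx : x ∈ w.head :: w.tail) :
    w.length + (f (of x)).length ≤ (f w).length + 1 := by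
  induction w with
  | ih1 y =>
    obtain rfl : x = y := by simpa using hx
    rw [length_of, Nat.add_comm]
  | ih2 y v _ hv =>
    rw [map_mul, length_mul, length_mul, length_of]
    rcases List.mem_cons.1 hx with rfl | hxv
    · have := length_le_length_apply f v
      omega
    · have := hv hxv
      have := length_pos (f (of y))
      omega

end FreeSemigroup

/-- If `σ`, `τ` are endomorphisms of a free semigroup and `τ (σ w) = w`, then `σ` sends
every letter occurring in the word `w` to a single letter (a word of length 1). -/
theorem length_one_of_retract {α : Type*}
    (σ τ : FreeSemigroup α →ₙ* FreeSemigroup α)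
    (w : FreeSemigroup α) (hw : τ (σ w) = w) :
    ∀ x ∈ w.head :: w.tail, (σ (FreeSemigroup.of x)).length = 1 := by
  intro x hx
  have hσ := FreeSemigroup.length_add_length_apply_le_of_mem σ hx
  have hτ : (σ w).length ≤ w.length :=
    (FreeSemigroup.length_le_length_apply τ (σ w)).trans_eq (congrArg _ hw)
  have := FreeSemigroup.length_pos (σ (FreeSemigroup.of x))
  omega
end
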